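/- arXiv:1602.06538 — 3 statements merged into one kernel-verified Lean document; each statement's English description precedes it below -/
import Mathlib

section
/- Let F be a number field and let P_1,…,P_k ∈ F[X_1,…,X_n] be polynomials which generate F[X_1,…,X_n] as an F-algebra. Then there exist constants C > 0 and d > 0 such that for every x = (x_1,…,x_n) ∈ F^n one has C⁻¹ · H_n(x)^{1/d} ≤ ∏_v max(1,|P_1(x)|_v,…,|P_k(x)|_v) ≤ C · H_n(x)^d, where H_n(x) := ∏_v max(1,|x_1|_v,…,|x_n|_v) and the products run over all places v of F. -/
open NumberField IsDedekindDomain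
open scoped Classical

/-- The normalized absolute value of an element of a number field `F` at a place of `F`:
at an infinite place `w` it is `w x ^ w.mult` (the usual absolute value at a real place, the
square of the modulus at a complex place); at a finite place `v` it is `q_v ^ (-ord_v x)`
where `q_v` is the cardinality of the residue field at `v`. -/
noncomputable def placeAbs (F : Type*) [Field F] [NumberField F] :
    InfinitePlace F ⊕ HeightOneSpectrum (𝓞 F) → F → ℝ
  | Sum.inl w => fun x => w x ^ w.mult
  | Sum.inr v => fun x =>
      if hx : x = 0 then 0
      else (Ideal.absNorm v.asIdeal : ℝ) ^
        Multiplicative.toAdd (WithZero.unzero (((v.valuation F).ne_zero_iff).mpr hx))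

/-- The height `H_n(x) = ∏_v max(1, |x_1|_v, …, |x_n|_v)` of a tuple `x ∈ F^n`, the product
running over all places `v` of `F` (all but finitely many factors equal `1`). -/
noncomputable def heightFn (F : Type*) [Field F] [NumberField F] {n : ℕ} (x : Fin n → F) : ℝ :=
  ∏ᶠ v : InfinitePlace F ⊕ HeightOneSpectrum (𝓞 F),
    Finset.univ.fold max 1 fun i => placeAbs F v (x i)

section Aux
open MvPolynomial WithZeroMulInt IsDedekindDomain.HeightOneSpectrum
open scoped NNReal

variable {F : Type*} [Field F] [NumberField F]

lemma one_lt_qv (v : HeightOneSpectrum (𝓞 F)) : 1 < (Ideal.absNorm v.asIdeal : ℝ≥0) := by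
  have hfin : Finite ((𝓞 F) ⧸ v.asIdeal) := by
    have := Ideal.finiteQuotientOfFreeOfNeBot v.asIdeal v.ne_bot
    exact this
  have h0 : Ideal.absNorm v.asIdeal ≠ 0 := (Ideal.absNorm_ne_zero_iff _).mpr hfin
  have h1 : Ideal.absNorm v.asIdeal ≠ 1 := by
    simpa only [ne_eq, Ideal.absNorm_eq_one_iff] using v.isPrime.ne_top
  have : 1 < Ideal.absNorm v.asIdeal := by omega
  exact_mod_cast this

lemma qv_ne_zero (v : HeightOneSpectrum (𝓞 F)) : (Ideal.absNorm v.asIdeal : ℝ≥0) ≠ 0 :=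
  ne_zero_of_lt (one_lt_qv v)

lemma placeAbs_inr (v : HeightOneSpectrum (𝓞 F)) (x : F) :
    placeAbs F (Sum.inr v) x = (toNNReal (qv_ne_zero v) (v.valuation F x) : ℝ) := by
  by_cases hx : x = 0
  · subst hx
    rw [toNNReal_pos_apply (qv_ne_zero v) (by simp)]
    simp [placeAbs]
  · have hv : v.valuation F x ≠ 0 := ((v.valuation F).ne_zero_iff).mpr hx
    rw [toNNReal_neg_apply (qv_ne_zero v) hv]
    simp only [placeAbs, dif_neg hx]
    push_cast
    rfl

lemma placeAbs_nonneg (v : InfinitePlace F ⊕ HeightOneSpectrum (𝓞 F)) (x : F) :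
    0 ≤ placeAbs F v x := by
  cases v with
  | inl w => exact pow_nonneg (w.1.nonneg x) _
  | inr v => rw [placeAbs_inr]; exact NNReal.coe_nonneg _

lemma placeAbs_zero (v : InfinitePlace F ⊕ HeightOneSpectrum (𝓞 F)) :
    placeAbs F v 0 = 0 := by
  cases v with
  | inl w => simp [placeAbs, InfinitePlace.mult_ne_zero]
  | inr v => rw [placeAbs_inr]; simp

lemma placeAbs_one (v : InfinitePlace F ⊕ HeightOneSpectrum (𝓞 F)) :
    placeAbs F v 1 = 1 := by
  cases v with
  | inl w => simp [placeAbs]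
  | inr v => rw [placeAbs_inr]; simp

lemma placeAbs_mul (v : InfinitePlace F ⊕ HeightOneSpectrum (𝓞 F)) (x y : F) :
    placeAbs F v (x * y) = placeAbs F v x * placeAbs F v y := by
  cases v with
  | inl w => simp only [placeAbs, map_mul, mul_pow]
  | inr v => simp only [placeAbs_inr, map_mul, NNReal.coe_mul]

lemma placeAbs_pow (v : InfinitePlace F ⊕ HeightOneSpectrum (𝓞 F)) (x : F) (n : ℕ) :
    placeAbs F v (x ^ n) = placeAbs F v x ^ n := by
  induction n with
  | zero => simp [placeAbs_one]
  | succ n ih => rw [pow_succ, pow_succ, placeAbs_mul, ih]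

lemma placeAbs_prod {ι : Type*} (v : InfinitePlace F ⊕ HeightOneSpectrum (𝓞 F))
    (S : Finset ι) (f : ι → F) :
    placeAbs F v (∏ i ∈ S, f i) = ∏ i ∈ S, placeAbs F v (f i) := by
  classical
  induction S using Finset.induction with
  | empty => simp [placeAbs_one]
  | insert _ _ h ih => rw [Finset.prod_insert h, Finset.prod_insert h, placeAbs_mul, ih]

lemma placeAbs_inr_le_one_iff (v : HeightOneSpectrum (𝓞 F)) (x : F) :
    placeAbs F (Sum.inr v) x ≤ 1 ↔ v.valuation F x ≤ 1 := by
  rw [placeAbs_inr, ← NNReal.coe_one, NNReal.coe_le_coe]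
  exact toNNReal_le_one_iff (one_lt_qv v)

lemma placeAbs_inr_add_le (v : HeightOneSpectrum (𝓞 F)) (x y : F) :
    placeAbs F (Sum.inr v) (x + y) ≤
      max (placeAbs F (Sum.inr v) x) (placeAbs F (Sum.inr v) y) := by
  simp only [placeAbs_inr]
  have h := (v.valuation F).map_add x y
  have hmono := (toNNReal_strictMono (one_lt_qv v)).monotone
  calc ((toNNReal (qv_ne_zero v) (v.valuation F (x + y)) : ℝ≥0) : ℝ)
      ≤ ((toNNReal (qv_ne_zero v) (max (v.valuation F x) (v.valuation F y)) : ℝ≥0) : ℝ) := by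
        exact_mod_cast hmono h
    _ = _ := by rw [hmono.map_max]; exact_mod_cast rfl

lemma finite_one_lt_valuation (x : F) :
    {v : HeightOneSpectrum (𝓞 F) | 1 < v.valuation F x}.Finite := by
  obtain ⟨⟨n, ⟨d, hd⟩⟩, hk⟩ := IsLocalization.surj (nonZeroDivisors (𝓞 F)) x
  have hd' : d ≠ 0 := nonZeroDivisors.ne_zero hd
  suffices h : {v : HeightOneSpectrum (𝓞 F) |
      v.valuation F (algebraMap (𝓞 F) F d : F) < 1}.Finite by
    apply h.subset
    intro v hv
    apply_fun v.valuation F at hk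
    simp only [Valuation.map_mul, valuation_of_algebraMap] at hk
    rw [Set.mem_setOf_eq, valuation_of_algebraMap]
    have hle := intValuation_le_one v n
    contrapose! hle
    change 1 < v.intValuation n
    rw [← hk, mul_comm]
    exact lt_of_lt_of_le hv (le_mul_of_one_le_left (by simp) hle)
  simp_rw [valuation_of_algebraMap]
  change {v : HeightOneSpectrum (𝓞 F) | v.intValuation d < 1}.Finite
  simp_rw [intValuation_lt_one_iff_dvd]
  apply Ideal.finite_factors
  simpa only [Submodule.zero_eq_bot, ne_eq, Ideal.span_singleton_eq_bot]

lemma placeAbs_inr_sum_le {ι : Type*} (v : HeightOneSpectrum (𝓞 F)) (S : Finset ι)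
    (f : ι → F) (K : ℝ) (hK : 0 ≤ K) (h : ∀ i ∈ S, placeAbs F (Sum.inr v) (f i) ≤ K) :
    placeAbs F (Sum.inr v) (∑ i ∈ S, f i) ≤ K := by
  classical
  induction S using Finset.induction with
  | empty => simpa [placeAbs_zero] using hK
  | @insert a s ha ih =>
      rw [Finset.sum_insert ha]
      refine le_trans (placeAbs_inr_add_le v _ _) (max_le (h a (by simp)) ?_)
      exact ih fun i hi => h i (by simp [hi])

lemma one_le_mult' (w : InfinitePlace F) : 1 ≤ w.mult := by
  unfold NumberField.InfinitePlace.mult; split <;> norm_num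

lemma mult_le_two (w : InfinitePlace F) : w.mult ≤ 2 := by
  unfold NumberField.InfinitePlace.mult; split <;> norm_num

/-- Bound for `placeAbs` of a finite sum, at any place. -/
lemma placeAbs_sum_le {ι : Type*} (v : InfinitePlace F ⊕ HeightOneSpectrum (𝓞 F))
    (S : Finset ι) (f : ι → F) (K : ℝ) (hK : 1 ≤ K)
    (h : ∀ i ∈ S, placeAbs F v (f i) ≤ K) :
    placeAbs F v (∑ i ∈ S, f i) ≤
      (Sum.elim (fun _ => ((S.card : ℝ)) ^ 2) (fun _ => 1) v) * K ^ 2 := by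
  cases v with
  | inr v =>
      simp only [Sum.elim_inr, one_mul]
      exact placeAbs_inr_sum_le v S f (K ^ 2) (by positivity)
        (fun i hi => (h i hi).trans (le_self_pow₀ (by linarith) (by norm_num)))
  | inl w =>
      simp only [Sum.elim_inl]
      rcases S.eq_empty_or_nonempty with rfl | hS
      · simp [placeAbs_zero]
      have hcard : (1 : ℝ) ≤ S.card := by
        exact_mod_cast Nat.one_le_iff_ne_zero.mpr (Finset.card_ne_zero_of_mem hS.choose_spec)
      have hwf : ∀ i ∈ S, w (f i) ≤ K := by
        intro i hi
        rcases le_or_gt (w (f i)) 1 with h1 | h1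
        · exact h1.trans hK
        · refine le_trans ?_ (h i hi)
          simpa only [placeAbs] using le_self_pow₀ h1.le (InfinitePlace.mult_ne_zero)
      have hsum : w (∑ i ∈ S, f i) ≤ (S.card : ℝ) * K := by
        refine le_trans (w.1.sum_le _ _) ?_
        calc ∑ i ∈ S, w (f i) ≤ ∑ _i ∈ S, K := Finset.sum_le_sum hwf
          _ = (S.card : ℝ) * K := by rw [Finset.sum_const, nsmul_eq_mul]
      have h1 : placeAbs F (Sum.inl w) (∑ i ∈ S, f i) ≤ ((S.card : ℝ) * K) ^ w.mult := by
        simpa only [placeAbs] using pow_le_pow_left₀ (show 0 ≤ w (∑ i ∈ S, f i) from w.1.nonneg _) hsum w.mult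
      refine h1.trans ?_
      calc ((S.card : ℝ) * K) ^ w.mult ≤ ((S.card : ℝ) * K) ^ 2 := by
            refine pow_le_pow_right₀ ?_ (mult_le_two w)
            nlinarith
        _ = (S.card : ℝ) ^ 2 * K ^ 2 := by rw [mul_pow]

lemma one_le_fold {ι : Type*} (s : Finset ι) (f : ι → ℝ) : 1 ≤ s.fold max 1 f :=
  (Finset.le_fold_max _).mpr (Or.inl le_rfl)

lemma le_fold_of_mem {ι : Type*} {s : Finset ι} {f : ι → ℝ} {i : ι} (hi : i ∈ s) :
    f i ≤ s.fold max 1 f :=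
  (Finset.le_fold_max _).mpr (Or.inr ⟨i, hi, le_rfl⟩)

open MvPolynomial in
lemma placeAbs_eval_le {m : ℕ} (Q : MvPolynomial (Fin m) F)
    (v : InfinitePlace F ⊕ HeightOneSpectrum (𝓞 F)) (y : Fin m → F) (c : ℝ)
    (hc1 : 1 ≤ c) (hc : ∀ d ∈ Q.support, placeAbs F v (Q.coeff d) ≤ c) :
    placeAbs F v (MvPolynomial.eval y Q) ≤
      (Sum.elim (fun _ => ((Q.support.card : ℝ)) ^ 2) (fun _ => 1) v) *
        (c * (Finset.univ.fold max 1 fun i => placeAbs F v (y i)) ^ Q.totalDegree) ^ 2 := by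
  set M : ℝ := Finset.univ.fold max 1 fun i => placeAbs F v (y i) with hM
  have hM1 : 1 ≤ M := one_le_fold _ _
  have hMD : (1 : ℝ) ≤ M ^ Q.totalDegree := one_le_pow₀ hM1
  rw [eval_eq']
  refine placeAbs_sum_le v Q.support _ (c * M ^ Q.totalDegree) (by nlinarith) ?_
  intro d hd
  rw [placeAbs_mul, placeAbs_prod]
  have h2 : ∏ i : Fin m, placeAbs F v (y i ^ d i) ≤ M ^ Q.totalDegree := by
    have h3 : ∏ i : Fin m, placeAbs F v (y i ^ d i) ≤ ∏ i : Fin m, M ^ d i := by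
      refine Finset.prod_le_prod (fun i _ => placeAbs_nonneg v _) (fun i _ => ?_)
      rw [placeAbs_pow]
      have hyM : placeAbs F v (y i) ≤ M := by
        rw [hM]; exact le_fold_of_mem (f := fun i => placeAbs F v (y i)) (Finset.mem_univ i)
      exact pow_le_pow_left₀ (placeAbs_nonneg v (y i)) hyM _
    refine h3.trans ?_
    rw [Finset.prod_pow_eq_pow_sum]
    refine pow_le_pow_right₀ hM1 ?_
    have hle := MvPolynomial.le_totalDegree hd
    rwa [Finsupp.sum_fintype _ _ (fun a => rfl)] at hle
  calc placeAbs F v (Q.coeff d) * ∏ i : Fin m, placeAbs F v (y i ^ d i)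
      ≤ c * (M ^ Q.totalDegree) :=
        mul_le_mul (hc d hd) h2
          (Finset.prod_nonneg fun i _ => placeAbs_nonneg _ _) (by linarith)

lemma fold_eq_one_of_le {ι : Type*} {s : Finset ι} {f : ι → ℝ}
    (h : ∀ i ∈ s, f i ≤ 1) : s.fold max 1 f = 1 :=
  le_antisymm ((Finset.fold_max_le _).mpr ⟨le_rfl, h⟩) (one_le_fold _ _)

lemma fold_mulSupport_finite {t : ℕ} (g : Fin t → F) :
    (Function.mulSupport fun v : InfinitePlace F ⊕ HeightOneSpectrum (𝓞 F) =>
      Finset.univ.fold max 1 fun j => placeAbs F v (g j)).Finite := by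
  have hbad : (⋃ j : Fin t, {u : HeightOneSpectrum (𝓞 F) | 1 < u.valuation F (g j)}).Finite :=
    Set.finite_iUnion fun j => finite_one_lt_valuation (g j)
  refine Set.Finite.subset (Set.Finite.union (Set.finite_range Sum.inl) (hbad.image Sum.inr)) ?_
  intro v hv
  cases v with
  | inl w => exact Or.inl ⟨w, rfl⟩
  | inr u =>
      refine Or.inr ⟨u, ?_, rfl⟩
      by_contra hu
      simp only [Set.mem_iUnion, Set.mem_setOf_eq, not_exists, not_lt] at hu
      refine hv (fold_eq_one_of_le fun j _ => ?_)
      exact (placeAbs_inr_le_one_iff u (g j)).mpr (hu j)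

lemma finprod_le_finprod_real {ι : Type*} {f g : ι → ℝ}
    (hf : (Function.mulSupport f).Finite) (hg : (Function.mulSupport g).Finite)
    (h0 : ∀ v, 0 ≤ f v) (h : ∀ v, f v ≤ g v) : ∏ᶠ v, f v ≤ ∏ᶠ v, g v := by
  classical
  rw [finprod_eq_prod_of_mulSupport_subset f
      (s := hf.toFinset ∪ hg.toFinset) (fun x hx => by simp only [Finset.coe_union, Set.Finite.coe_toFinset, Set.mem_union]; exact Or.inl hx),
    finprod_eq_prod_of_mulSupport_subset g
      (s := hf.toFinset ∪ hg.toFinset) (fun x hx => by simp only [Finset.coe_union, Set.Finite.coe_toFinset, Set.mem_union]; exact Or.inr hx)]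
  exact Finset.prod_le_prod (fun i _ => h0 i) (fun i _ => h i)

lemma one_le_finprod_real {ι : Type*} {f : ι → ℝ}
    (hf : (Function.mulSupport f).Finite) (h1 : ∀ v, 1 ≤ f v) : 1 ≤ ∏ᶠ v, f v := by
  classical
  rw [finprod_eq_prod_of_mulSupport_subset f (s := hf.toFinset) (fun x hx => hf.mem_toFinset.mpr hx)]
  calc (1 : ℝ) = ∏ _i ∈ hf.toFinset, 1 := by simp
    _ ≤ ∏ i ∈ hf.toFinset, f i :=
        Finset.prod_le_prod (fun i _ => by norm_num) (fun i _ => h1 i)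

open MvPolynomial in
lemma main_ineq {m l : ℕ} (Q : Fin l → MvPolynomial (Fin m) F) :
    ∃ C : ℝ, 1 ≤ C ∧ ∃ E : ℕ, ∀ y : Fin m → F,
      (∏ᶠ v : InfinitePlace F ⊕ HeightOneSpectrum (𝓞 F),
          Finset.univ.fold max 1 fun j => placeAbs F v (MvPolynomial.eval y (Q j))) ≤
        C * (∏ᶠ v : InfinitePlace F ⊕ HeightOneSpectrum (𝓞 F),
          Finset.univ.fold max 1 fun i => placeAbs F v (y i)) ^ E := by
  classical
  set arch : (InfinitePlace F ⊕ HeightOneSpectrum (𝓞 F)) → Fin l → ℝ :=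
    fun v j => Sum.elim (fun _ => ((Q j).support.card : ℝ) ^ 2) (fun _ => 1) v with harch
  set cf : (InfinitePlace F ⊕ HeightOneSpectrum (𝓞 F)) → Fin l → ℝ :=
    fun v j => (Q j).support.fold max 1 (fun d => placeAbs F v ((Q j).coeff d)) with hcf
  set B : (InfinitePlace F ⊕ HeightOneSpectrum (𝓞 F)) → ℝ :=
    fun v => Finset.univ.fold max 1 (fun j => arch v j * cf v j ^ 2) with hB
  set D : ℕ := Finset.univ.fold max 0 (fun j => (Q j).totalDegree) with hD
  have hDj : ∀ j : Fin l, (Q j).totalDegree ≤ D :=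
    fun j => (Finset.le_fold_max _).mpr (Or.inr ⟨j, Finset.mem_univ j, le_rfl⟩)
  have hB1 : ∀ v, 1 ≤ B v := fun v => one_le_fold _ _
  -- finiteness of the support of B
  have hBsupp : (Function.mulSupport B).Finite := by
    have hbad : (⋃ j : Fin l, ⋃ d ∈ (Q j).support,
        {u : HeightOneSpectrum (𝓞 F) | 1 < u.valuation F ((Q j).coeff d)}).Finite :=
      Set.finite_iUnion fun j =>
        Set.Finite.biUnion ((Q j).support.finite_toSet)
          (fun d _ => finite_one_lt_valuation _)
    refine Set.Finite.subset
      (Set.Finite.union (Set.finite_range Sum.inl) (hbad.image Sum.inr)) ?_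
    intro v hv
    cases v with
    | inl w => exact Or.inl ⟨w, rfl⟩
    | inr u =>
        refine Or.inr ⟨u, ?_, rfl⟩
        by_contra hu
        simp only [Set.mem_iUnion, Set.mem_setOf_eq, not_exists, not_lt] at hu
        refine hv ?_
        have hcf1 : ∀ j : Fin l, cf (Sum.inr u) j = 1 := fun j =>
          fold_eq_one_of_le fun d hd =>
            (placeAbs_inr_le_one_iff u _).mpr (hu j d hd)
        refine fold_eq_one_of_le fun j _ => ?_
        rw [hcf1 j]
        simp [harch]
  refine ⟨∏ᶠ v, B v, one_le_finprod_real hBsupp hB1, 2 * D, fun y => ?_⟩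
  set M : (InfinitePlace F ⊕ HeightOneSpectrum (𝓞 F)) → ℝ :=
    fun v => Finset.univ.fold max 1 fun i => placeAbs F v (y i) with hM
  have hM1 : ∀ v, 1 ≤ M v := fun v => one_le_fold _ _
  have key : ∀ v, (Finset.univ.fold max 1 fun j => placeAbs F v (MvPolynomial.eval y (Q j)))
      ≤ B v * M v ^ (2 * D) := by
    intro v
    have hBM1 : (1 : ℝ) ≤ B v * M v ^ (2 * D) := by
      have := one_le_pow₀ (hM1 v) (n := 2 * D)
      nlinarith [hB1 v]
    refine (Finset.fold_max_le _).mpr ⟨hBM1, fun j _ => ?_⟩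
    have hcf1 : 1 ≤ cf v j := one_le_fold _ _
    have h1 := placeAbs_eval_le (Q j) v y (cf v j) hcf1
      (fun d hd => le_fold_of_mem (f := fun d => placeAbs F v ((Q j).coeff d)) hd)
    have h2 : (Sum.elim (fun _ => (((Q j).support.card : ℝ)) ^ 2) (fun _ => 1) v) *
        (cf v j * M v ^ (Q j).totalDegree) ^ 2
        = (arch v j * cf v j ^ 2) * M v ^ ((Q j).totalDegree * 2) := by
      rw [mul_pow, ← pow_mul, harch]
      ring
    rw [h2] at h1
    refine h1.trans ?_
    have h3 : arch v j * cf v j ^ 2 ≤ B v :=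
      le_fold_of_mem (f := fun j => arch v j * cf v j ^ 2) (Finset.mem_univ j)
    have h4 : M v ^ ((Q j).totalDegree * 2) ≤ M v ^ (2 * D) := by
      refine pow_le_pow_right₀ (hM1 v) ?_
      have := hDj j; omega
    have harchnn : 0 ≤ arch v j * cf v j ^ 2 := by
      have : (0:ℝ) ≤ arch v j := by
        rcases v with w | u
        · simp only [harch, Sum.elim_inl]; positivity
        · simp [harch]
      nlinarith
    exact mul_le_mul h3 h4 (pow_nonneg (le_trans zero_le_one (hM1 v)) _) (by linarith [hB1 v])
  have hSe := fold_mulSupport_finite (g := fun j => MvPolynomial.eval y (Q j))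
  have hSM := fold_mulSupport_finite (g := y)
  have hSMpow : (Function.mulSupport fun v => M v ^ (2 * D)).Finite := by
    refine hSM.subset ?_
    intro v hv
    simp only [Function.mem_mulSupport] at hv ⊢
    intro h
    apply hv
    have hMv : M v = 1 := h
    rw [hMv, one_pow]
  have hSBM : (Function.mulSupport fun v => B v * M v ^ (2 * D)).Finite :=
    (hBsupp.union hSMpow).subset (Function.mulSupport_mul _ _)
  calc (∏ᶠ v, Finset.univ.fold max 1 fun j => placeAbs F v (MvPolynomial.eval y (Q j)))
      ≤ ∏ᶠ v, B v * M v ^ (2 * D) := by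
        refine finprod_le_finprod_real hSe hSBM (fun v => ?_) key
        exact le_trans zero_le_one (one_le_fold _ _)
    _ = (∏ᶠ v, B v) * ∏ᶠ v, M v ^ (2 * D) := finprod_mul_distrib hBsupp hSMpow
    _ = (∏ᶠ v, B v) * (∏ᶠ v, M v) ^ (2 * D) := by rw [← finprod_pow hSM]

lemma aeval_self_eq_eval {n : ℕ} (x : Fin n → F) (q : MvPolynomial (Fin n) F) :
    (MvPolynomial.aeval x) q = MvPolynomial.eval x q := by
  rw [← MvPolynomial.coe_aeval_eq_eval]
  rfl

end Aux

/-- Let `F` be a number field and `P_1, …, P_k ∈ F[X_1, …, X_n]` polynomials generating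
`F[X_1, …, X_n]` as an `F`-algebra.  Then there are constants `C > 0` and `d > 0` such that
for every `x ∈ F^n`,
`C⁻¹ · H_n(x)^(1/d) ≤ ∏_v max(1, |P_1(x)|_v, …, |P_k(x)|_v) ≤ C · H_n(x)^d`. -/
theorem height_wrt_generators_equiv (F : Type*) [Field F] [NumberField F]
    (n k : ℕ) (P : Fin k → MvPolynomial (Fin n) F)
    (hgen : Algebra.adjoin F (Set.range P) = ⊤) :
    ∃ C > (0 : ℝ), ∃ d > (0 : ℝ), ∀ x : Fin n → F,
      C⁻¹ * heightFn F x ^ (1 / d) ≤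
        (∏ᶠ v : InfinitePlace F ⊕ HeightOneSpectrum (𝓞 F),
          Finset.univ.fold max 1 fun j => placeAbs F v (MvPolynomial.eval x (P j))) ∧
      (∏ᶠ v : InfinitePlace F ⊕ HeightOneSpectrum (𝓞 F),
          Finset.univ.fold max 1 fun j => placeAbs F v (MvPolynomial.eval x (P j)))
        ≤ C * heightFn F x ^ d := by
  classical
  obtain ⟨C1, hC1, E1, h1⟩ := main_ineq P
  have hrange : ∀ i : Fin n, ∃ R : MvPolynomial (Fin k) F,
      MvPolynomial.aeval P R = MvPolynomial.X i := by
    intro i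
    have hmem : (MvPolynomial.X i : MvPolynomial (Fin n) F) ∈
        Algebra.adjoin F (Set.range P) := by rw [hgen]; trivial
    rw [Algebra.adjoin_range_eq_range_aeval] at hmem
    exact hmem
  choose R hR using hrange
  obtain ⟨C2, hC2, E2, h2⟩ := main_ineq R
  have hCpos : (0 : ℝ) < max C1 C2 := lt_of_lt_of_le zero_lt_one (le_trans hC1 (le_max_left _ _))
  have hd1 : (1 : ℝ) ≤ (E1 : ℝ) + (E2 : ℝ) + 1 := by
    have a1 : (0:ℝ) ≤ (E1 : ℝ) := Nat.cast_nonneg _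
    have a2 : (0:ℝ) ≤ (E2 : ℝ) := Nat.cast_nonneg _
    linarith
  refine ⟨max C1 C2, hCpos, (E1 : ℝ) + (E2 : ℝ) + 1, by positivity, fun x => ?_⟩
  set d : ℝ := (E1 : ℝ) + (E2 : ℝ) + 1 with hd
  set Pi : ℝ := ∏ᶠ v : InfinitePlace F ⊕ HeightOneSpectrum (𝓞 F),
    Finset.univ.fold max 1 fun j => placeAbs F v (MvPolynomial.eval x (P j)) with hPi
  have hH1 : 1 ≤ heightFn F x :=
    one_le_finprod_real (fold_mulSupport_finite (g := x)) (fun v => one_le_fold _ _)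
  have hPi1 : 1 ≤ Pi :=
    one_le_finprod_real (fold_mulSupport_finite (g := fun j => MvPolynomial.eval x (P j)))
      (fun v => one_le_fold _ _)
  have hHnn : (0:ℝ) ≤ heightFn F x := le_trans zero_le_one hH1
  have hPinn : (0:ℝ) ≤ Pi := le_trans zero_le_one hPi1
  constructor
  · -- lower bound
    set y : Fin k → F := fun j => MvPolynomial.eval x (P j) with hy
    have hx : ∀ i : Fin n, MvPolynomial.eval y (R i) = x i := by
      intro i
      have hcomp := MvPolynomial.comp_aeval_apply P (MvPolynomial.aeval x) (R i)
      rw [hR i, MvPolynomial.aeval_X] at hcomp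
      rw [hcomp, aeval_self_eq_eval]
      congr 1
    have hHeq : heightFn F x = ∏ᶠ v : InfinitePlace F ⊕ HeightOneSpectrum (𝓞 F),
        Finset.univ.fold max 1 fun i => placeAbs F v (MvPolynomial.eval y (R i)) := by
      unfold heightFn
      refine finprod_congr fun v => ?_
      congr 1
      funext i
      rw [hx i]
    have hkey : heightFn F x ≤ C2 * Pi ^ d := by
      have h2x := h2 y
      rw [← hHeq] at h2x
      refine h2x.trans ?_
      have hpow : Pi ^ (E2 : ℕ) ≤ Pi ^ d := by
        rw [← Real.rpow_natCast Pi E2]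
        exact Real.rpow_le_rpow_of_exponent_le hPi1 (by rw [hd]; push_cast; linarith)
      have h2' : (∏ᶠ v : InfinitePlace F ⊕ HeightOneSpectrum (𝓞 F),
          Finset.univ.fold max 1 fun i => placeAbs F v (y i)) = Pi := rfl
      rw [h2'] at *
      nlinarith [Real.rpow_nonneg hPinn d]
    have hdpos : (0:ℝ) < d := by linarith
    have hmain : heightFn F x ^ (1/d) ≤ (max C1 C2) * Pi := by
      calc heightFn F x ^ (1/d) ≤ (C2 * Pi ^ d) ^ (1/d) :=
            Real.rpow_le_rpow hHnn hkey (by positivity)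
        _ = C2 ^ (1/d) * (Pi ^ d) ^ (1/d) :=
            Real.mul_rpow (by linarith) (Real.rpow_nonneg hPinn d)
        _ = C2 ^ (1/d) * Pi := by
            rw [← Real.rpow_mul hPinn, mul_one_div_cancel (ne_of_gt hdpos), Real.rpow_one]
        _ ≤ (max C1 C2) * Pi := by
            have : C2 ^ (1/d) ≤ C2 ^ (1:ℝ) :=
              Real.rpow_le_rpow_of_exponent_le hC2 (by rw [div_le_one hdpos]; linarith)
            rw [Real.rpow_one] at this
            have := this.trans (le_max_right C1 C2)
            nlinarith
    rw [inv_mul_le_iff₀ hCpos]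
    exact hmain
  · -- upper bound
    have h1x := h1 x
    have h1' : (∏ᶠ v : InfinitePlace F ⊕ HeightOneSpectrum (𝓞 F),
        Finset.univ.fold max 1 fun i => placeAbs F v (x i)) = heightFn F x := rfl
    rw [h1'] at h1x
    refine h1x.trans ?_
    have hpow : heightFn F x ^ (E1 : ℕ) ≤ heightFn F x ^ d := by
      rw [← Real.rpow_natCast (heightFn F x) E1]
      exact Real.rpow_le_rpow_of_exponent_le hH1 (by rw [hd]; push_cast; linarith)
    have hC : C1 ≤ max C1 C2 := le_max_left _ _
    nlinarith [Real.rpow_nonneg hHnn d, pow_nonneg hHnn E1]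
end

section
/- Let F be a number field and n ≥ 1. There exists d > 0 such that the series ∑_{γ ∈ GL_n(F)} N(γ)^{-d} converges, where for γ ∈ GL_n(F) one sets N(γ) := ∏_v max(1, max_{i,j} |γ_{ij}|_v, |det γ|_v^{-1}), the product running over all places v of F. -/
open NumberField IsDedekindDomain
open scoped Classical MatrixGroups

noncomputable def glHeight (F : Type*) [Field F] [NumberField F] {n : ℕ}
    (γ : GL (Fin n) F) : ℝ :=
  ∏ᶠ v : InfinitePlace F ⊕ HeightOneSpectrum (𝓞 F),
    Finset.univ.fold max
      (max 1 (placeAbs F v (Matrix.det (γ : Matrix (Fin n) (Fin n) F)))⁻¹)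
      fun p : Fin n × Fin n => placeAbs F v ((γ : Matrix (Fin n) (Fin n) F) p.1 p.2)

namespace GLHeightAux

variable {F : Type*} [Field F] [NumberField F]

/-- divisibility criterion -/
theorem dvd_of_intValuation_le {a b : 𝓞 F} (ha : a ≠ 0) (hb : b ≠ 0)
    (h : ∀ v : HeightOneSpectrum (𝓞 F), v.intValuation a ≤ v.intValuation b) : b ∣ a := by
  have hA : Ideal.span {a} ≠ (0 : Ideal (𝓞 F)) := by
    simpa [Ideal.zero_eq_bot, Ideal.span_singleton_eq_bot] using ha
  have hB : Ideal.span {b} ≠ (0 : Ideal (𝓞 F)) := by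
    simpa [Ideal.zero_eq_bot, Ideal.span_singleton_eq_bot] using hb
  have key : ∀ (v : IsDedekindDomain.HeightOneSpectrum (𝓞 F)) (n : ℕ),
      v.asIdeal ^ n ∣ Ideal.span {b} → v.asIdeal ^ n ∣ Ideal.span {a} := by
    intro v n hn
    rw [← v.intValuation_le_pow_iff_dvd] at hn ⊢
    calc v.intValuationDef a = v.intValuation a := rfl
      _ ≤ v.intValuation b := h v
      _ ≤ _ := hn
  have main : Ideal.span {b} ∣ Ideal.span {a} := by
    rw [UniqueFactorizationMonoid.dvd_iff_normalizedFactors_le_normalizedFactors hB hA,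
      Multiset.le_iff_count]
    intro p
    by_cases hp : p ∈ UniqueFactorizationMonoid.normalizedFactors (Ideal.span {b})
    · have hirr : Irreducible p := UniqueFactorizationMonoid.irreducible_of_normalized_factor _ hp
      have hprime : Prime p := UniqueFactorizationMonoid.prime_of_normalized_factor _ hp
      set v : HeightOneSpectrum (𝓞 F) :=
        ⟨p, Ideal.isPrime_of_prime hprime, by
          simpa [Ideal.zero_eq_bot] using hprime.ne_zero⟩ with hv
      have e1 := (UniqueFactorizationMonoid.emultiplicity_eq_count_normalizedFactors
        hirr hB).symm
      have e2 := (UniqueFactorizationMonoid.emultiplicity_eq_count_normalizedFactors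
        hirr hA).symm
      rw [normalize_eq] at e1 e2
      have hle : emultiplicity p (Ideal.span {b}) ≤ emultiplicity p (Ideal.span {a}) :=
        emultiplicity_le_emultiplicity_iff.mpr fun n hn => key v n hn
      rw [← e1, ← e2] at hle
      exact_mod_cast hle
    · simp [Multiset.count_eq_zero_of_notMem hp]
  have hle := Ideal.dvd_iff_le.mp main
  exact Ideal.span_singleton_le_span_singleton.mp hle

/-- integrality criterion -/
theorem exists_int_of_valuation_le {x : F}
    (h : ∀ v : HeightOneSpectrum (𝓞 F), v.valuation F x ≤ 1) :
    ∃ a : 𝓞 F, algebraMap (𝓞 F) F a = x := by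
  by_cases hx : x = 0
  · exact ⟨0, by simp [hx]⟩
  obtain ⟨a, b, hbmem, hab⟩ := IsFractionRing.div_surjective (A := 𝓞 F) x
  have hbne : b ≠ 0 := nonZeroDivisors.ne_zero hbmem
  have hane : a ≠ 0 := by
    rintro rfl
    simp only [map_zero, zero_div] at hab
    exact hx hab.symm
  have hvb : ∀ v : HeightOneSpectrum (𝓞 F), v.valuation F (algebraMap (𝓞 F) F b) ≠ 0 := by
    intro v
    rw [Valuation.ne_zero_iff]
    simpa using hbne
  have hdvd : b ∣ a := by
    apply dvd_of_intValuation_le hane hbne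
    intro v
    have h1 := h v
    rw [← hab, Valuation.map_div] at h1
    have h2 := mul_le_mul_left h1 (v.valuation F (algebraMap (𝓞 F) F b))
    rw [div_mul_cancel₀ _ (hvb v), one_mul] at h2
    rwa [v.valuation_of_algebraMap, v.valuation_of_algebraMap] at h2
  obtain ⟨c, rfl⟩ := hdvd
  refine ⟨c, ?_⟩
  rw [← hab, map_mul, mul_comm, mul_div_assoc, div_self (by
    rw [Ne, map_eq_zero_iff _ (IsFractionRing.injective (𝓞 F) F)]
    exact hbne), mul_one]

variable (F) in
/-- set of finite places where `x` has valuation `≠ 1` -/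
def badSet (x : F) : Set (HeightOneSpectrum (𝓞 F)) := {v | v.valuation F x ≠ 1}

theorem badSet_finite {x : F} (hx : x ≠ 0) : (badSet F x).Finite := by
  obtain ⟨a, b, hbmem, hab⟩ := IsFractionRing.div_surjective (A := 𝓞 F) x
  have hbne : b ≠ 0 := nonZeroDivisors.ne_zero hbmem
  have hane : a ≠ 0 := by
    rintro rfl
    simp only [map_zero, zero_div] at hab
    exact hx hab.symm
  have hA : Ideal.span {a} ≠ (0 : Ideal (𝓞 F)) := by
    simpa [Ideal.zero_eq_bot, Ideal.span_singleton_eq_bot] using hane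
  have hB : Ideal.span {b} ≠ (0 : Ideal (𝓞 F)) := by
    simpa [Ideal.zero_eq_bot, Ideal.span_singleton_eq_bot] using hbne
  apply Set.Finite.subset ((Ideal.finite_factors hA).union (Ideal.finite_factors hB))
  intro v hv
  by_contra hcon
  rw [Set.mem_union, Set.mem_setOf_eq, Set.mem_setOf_eq] at hcon
  push_neg at hcon
  have h1 : v.intValuation a = 1 :=
    le_antisymm (v.intValuation_le_one a) (not_lt.mp fun hlt =>
      hcon.1 ((v.intValuation_lt_one_iff_dvd a).mp hlt))
  have h2 : v.intValuation b = 1 :=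
    le_antisymm (v.intValuation_le_one b) (not_lt.mp fun hlt =>
      hcon.2 ((v.intValuation_lt_one_iff_dvd b).mp hlt))
  apply hv
  show v.valuation F x = 1
  rw [← hab, Valuation.map_div, v.valuation_of_algebraMap, v.valuation_of_algebraMap,
    h1, h2, div_one]

variable (F) in
noncomputable def badFinset (x : F) : Finset (HeightOneSpectrum (𝓞 F)) :=
  if hx : x = 0 then ∅ else (badSet_finite hx).toFinset

theorem placeAbs_inr_eq_one {x : F} (hx : x ≠ 0) {v : HeightOneSpectrum (𝓞 F)}
    (hv : v.valuation F x = 1) : placeAbs F (Sum.inr v) x = 1 := by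
  have hu : WithZero.unzero (((v.valuation F).ne_zero_iff).mpr hx) = 1 :=
    WithZero.coe_inj.mp (by rw [WithZero.coe_unzero, hv, WithZero.coe_one])
  simp [placeAbs, hx, hu]

theorem mem_badFinset {x : F} (hx : x ≠ 0) {v : HeightOneSpectrum (𝓞 F)} :
    v ∈ badFinset F x ↔ v.valuation F x ≠ 1 := by
  simp [badFinset, hx, badSet, Set.Finite.mem_toFinset]

variable (F) in
noncomputable def eExp (v : HeightOneSpectrum (𝓞 F)) (x : F) : ℕ :=
  if hx : x = 0 then 0
  else (Multiplicative.toAdd (WithZero.unzero (((v.valuation F).ne_zero_iff).mpr hx))).toNat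

theorem one_lt_q (v : HeightOneSpectrum (𝓞 F)) : 1 < Ideal.absNorm v.asIdeal := by
  have h0 : Ideal.absNorm v.asIdeal ≠ 0 := by
    rw [Ne, Ideal.absNorm_eq_zero_iff]
    exact v.ne_bot
  have h1 : Ideal.absNorm v.asIdeal ≠ 1 := by
    rw [Ne, Ideal.absNorm_eq_one_iff]
    exact v.isPrime.ne_top
  omega

theorem factor_eq (v : HeightOneSpectrum (𝓞 F)) (x : F) :
    max 1 (placeAbs F (Sum.inr v) x) = (Ideal.absNorm v.asIdeal : ℝ) ^ (eExp F v x) := by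
  by_cases hx : x = 0
  · subst hx
    simp [placeAbs, eExp]
  · have hq : (1 : ℝ) < (Ideal.absNorm v.asIdeal : ℝ) := by exact_mod_cast one_lt_q v
    set t : ℤ := Multiplicative.toAdd (WithZero.unzero (((v.valuation F).ne_zero_iff).mpr hx))
      with ht
    have hpa : placeAbs F (Sum.inr v) x = (Ideal.absNorm v.asIdeal : ℝ) ^ t := by
      simp only [placeAbs, dif_neg hx]; rfl
    have heE : eExp F v x = t.toNat := by simp only [eExp, dif_neg hx]; rfl
    rw [hpa, heE]
    rcases le_or_gt 0 t with h0 | h0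
    · have hz : (Ideal.absNorm v.asIdeal : ℝ) ^ t
          = (Ideal.absNorm v.asIdeal : ℝ) ^ (t.toNat : ℕ) := by
        rw [← zpow_natCast, Int.toNat_of_nonneg h0]
      rw [hz, max_eq_right (one_le_pow₀ hq.le)]
    · rw [Int.toNat_of_nonpos h0.le, pow_zero, max_eq_left]
      have hrw : (Ideal.absNorm v.asIdeal : ℝ) ^ t
          = ((Ideal.absNorm v.asIdeal : ℝ) ^ ((-t).toNat : ℤ))⁻¹ := by
        rw [Int.toNat_of_nonneg (by omega), ← zpow_neg, neg_neg]
      rw [hrw, zpow_natCast]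
      exact inv_le_one_of_one_le₀ (one_le_pow₀ hq.le)

theorem eExp_eq_zero {x : F} {v : HeightOneSpectrum (𝓞 F)} (hv : v ∉ badFinset F x) :
    eExp F v x = 0 := by
  by_cases hx : x = 0
  · simp [eExp, hx]
  · rw [mem_badFinset hx] at hv
    push_neg at hv
    have hu : WithZero.unzero (((v.valuation F).ne_zero_iff).mpr hx) = 1 :=
      WithZero.coe_inj.mp (by rw [WithZero.coe_unzero, hv, WithZero.coe_one])
    simp [eExp, hx, hu]

variable (F) in
noncomputable def den (x : F) : ℕ :=
  ∏ v ∈ badFinset F x, Ideal.absNorm v.asIdeal ^ eExp F v x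

theorem den_pos (x : F) : 0 < den F x := by
  apply Finset.prod_pos
  intro v _
  exact pow_pos (Nat.lt_of_lt_of_le Nat.zero_lt_one (one_lt_q v).le) _

theorem den_valuation_le (x : F) (v : HeightOneSpectrum (𝓞 F)) :
    v.valuation F ((den F x : F) * x) ≤ 1 := by
  by_cases hx : x = 0
  · simp [hx]
  have hne := ((v.valuation F).ne_zero_iff (x := x)).mpr hx
  set t : ℤ := Multiplicative.toAdd (WithZero.unzero hne) with ht
  have hvx : v.valuation F x = ((Multiplicative.ofAdd t : Multiplicative ℤ) : WithZero (Multiplicative ℤ)) := by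
    rw [ht, ofAdd_toAdd, WithZero.coe_unzero]
  have hd : v.valuation F ((den F x : F))
      ≤ ((Multiplicative.ofAdd (-(eExp F v x : ℤ)) : Multiplicative ℤ) : WithZero (Multiplicative ℤ)) := by
    have hcast : ((den F x : F)) = algebraMap (𝓞 F) F ((den F x : ℕ) : 𝓞 F) :=
      (map_natCast (algebraMap (𝓞 F) F) (den F x)).symm
    rw [hcast, v.valuation_of_algebraMap]
    apply (v.intValuation_le_pow_iff_dvd _ _).mpr
    rw [Ideal.dvd_span_singleton]
    by_cases hv : v ∈ badFinset F x
    · have hsplit : den F x = Ideal.absNorm v.asIdeal ^ eExp F v x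
          * ∏ w ∈ (badFinset F x).erase v, Ideal.absNorm w.asIdeal ^ eExp F w x :=
        (Finset.mul_prod_erase _ _ hv).symm
      rw [hsplit]
      push_cast
      exact Ideal.mul_mem_right _ _ (Ideal.pow_mem_pow (Ideal.absNorm_mem _) _)
    · rw [eExp_eq_zero hv, pow_zero, Ideal.one_eq_top]
      exact Submodule.mem_top
  rw [map_mul]
  refine le_trans (mul_le_mul' hd (le_of_eq hvx)) ?_
  rw [← WithZero.coe_mul, ← ofAdd_add, ← WithZero.coe_one, ← ofAdd_zero,
    WithZero.coe_le_coe, Multiplicative.ofAdd_le]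
  have heE : eExp F v x = t.toNat := by simp only [eExp, dif_neg hx, ht]
  omega

variable (F) in
noncomputable def numer (x : F) : 𝓞 F :=
  (exists_int_of_valuation_le (den_valuation_le x)).choose

theorem numer_spec (x : F) : algebraMap (𝓞 F) F (numer F x) = (den F x : F) * x :=
  (exists_int_of_valuation_le (den_valuation_le x)).choose_spec

variable (F) in
noncomputable def coords (x : F) : (F →+* ℂ) → ℤ :=
  fun i => (RingOfIntegers.basis F).repr (numer F x) (equivReindex F i)

variable (F) in
noncomputable def Jmap (x : F) : ℕ × ((F →+* ℂ) → ℤ) := (den F x, coords F x)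

theorem Jmap_injective : Function.Injective (Jmap F) := by
  intro x y hxy
  have h1 : den F x = den F y := congrArg Prod.fst hxy
  have h2 : coords F x = coords F y := congrArg Prod.snd hxy
  have h3 : numer F x = numer F y := by
    apply (RingOfIntegers.basis F).ext_elem
    intro j
    have := congrFun h2 ((equivReindex F).symm j)
    simpa [coords] using this
  have h4 : (den F x : F) * x = (den F x : F) * y := by
    conv_rhs => rw [h1]
    rw [← numer_spec, ← numer_spec, h3]
  have hd : (den F x : F) ≠ 0 := by
    exact_mod_cast (den_pos x).ne'
  exact mul_left_cancel₀ hd h4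

theorem one_le_prod_real {ι : Type*} (s : Finset ι) {f : ι → ℝ} (h : ∀ i ∈ s, 1 ≤ f i) :
    1 ≤ ∏ i ∈ s, f i := by
  calc (1 : ℝ) = ∏ _i ∈ s, 1 := (Finset.prod_const_one).symm
  _ ≤ ∏ i ∈ s, f i := Finset.prod_le_prod (fun i _ => zero_le_one) h

theorem single_le_prod_real {ι : Type*} {s : Finset ι} {f : ι → ℝ} (h : ∀ i ∈ s, 1 ≤ f i)
    {j : ι} (hj : j ∈ s) : f j ≤ ∏ i ∈ s, f i := by
  rw [← Finset.mul_prod_erase _ _ hj]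
  exact le_mul_of_one_le_right (le_trans zero_le_one (h j hj))
    (one_le_prod_real _ fun i hi => h i (Finset.mem_of_mem_erase hi))

variable (F) in
noncomputable def Hinf (x : F) : ℝ := ∏ w : InfinitePlace F, max 1 (w x ^ w.mult)

theorem one_le_Hinf (x : F) : 1 ≤ Hinf F x :=
  one_le_prod_real _ fun w _ => le_max_left _ _

variable (F) in
noncomputable def THeight (x : F) : ℝ := (den F x : ℝ) * Hinf F x

theorem one_le_den_cast (x : F) : (1 : ℝ) ≤ (den F x : ℝ) := by
  exact_mod_cast den_pos x

theorem one_le_THeight (x : F) : 1 ≤ THeight F x := by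
  have h1 := one_le_den_cast x
  have h2 := one_le_Hinf x
  calc (1 : ℝ) = 1 * 1 := (one_mul 1).symm
  _ ≤ (den F x : ℝ) * Hinf F x := mul_le_mul h1 h2 zero_le_one (le_trans zero_le_one h1)

theorem den_le_THeight (x : F) : (den F x : ℝ) ≤ THeight F x :=
  le_mul_of_one_le_right (by positivity) (one_le_Hinf x)

theorem house_le_Hinf (x : F) : house x ≤ Hinf F x := by
  rw [house_eq_sup']
  rw [Finset.comp_sup'_eq_sup'_comp _ ((↑) : NNReal → ℝ) (fun a b => rfl)]
  apply Finset.sup'_le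
  intro φ _
  have h1 : (‖φ x‖₊ : ℝ) = (InfinitePlace.mk φ) x := by
    rw [InfinitePlace.apply, coe_nnnorm]
  show (‖φ x‖₊ : ℝ) ≤ Hinf F x
  rw [h1]
  set w := InfinitePlace.mk φ with hw
  have h2 : w x ≤ max 1 (w x ^ w.mult) := by
    rcases le_or_gt (w x) 1 with h | h
    · exact le_trans h (le_max_left _ _)
    · exact le_trans (le_self_pow₀ h.le InfinitePlace.mult_ne_zero) (le_max_right _ _)
  exact le_trans h2 (single_le_prod_real (f := fun w' => max 1 (w' x ^ w'.mult))
    (fun w' _ => le_max_left _ _) (Finset.mem_univ w))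

theorem exists_coords_bound :
    ∃ C : ℝ, 0 ≤ C ∧ ∀ (x : F) (i : F →+* ℂ), |(coords F x i : ℝ)| ≤ C * THeight F x := by
  obtain ⟨C0, hC0⟩ : ∃ C0 : ℝ, ∀ (a : 𝓞 F) (i : F →+* ℂ),
      ‖((((integralBasis F).reindex (equivReindex F).symm).repr a i : ℚ) : ℂ)‖
        ≤ C0 * house (algebraMap (𝓞 F) F a) :=
    ⟨_, fun a i => NumberField.house.basis_repr_norm_le_const_mul_house F a i⟩
  refine ⟨max C0 0, le_max_right _ _, fun x i => ?_⟩
  have key : |(coords F x i : ℝ)|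
      = ‖((((integralBasis F).reindex (equivReindex F).symm).repr (numer F x) i : ℚ) : ℂ)‖ := by
    rw [Module.Basis.repr_reindex_apply]
    rw [show ((numer F x : F)) = algebraMap (𝓞 F) F (numer F x) from rfl,
      integralBasis_repr_apply]
    rw [Equiv.symm_symm]
    simp [coords, eq_intCast, Rat.cast_intCast, Complex.norm_intCast]
  rw [key]
  refine le_trans (hC0 (numer F x) i) ?_
  have hhouse : house (algebraMap (𝓞 F) F (numer F x)) ≤ THeight F x := by
    rw [numer_spec]
    refine le_trans (house_mul_le _ _) ?_
    have h1 : house ((den F x : F)) = (den F x : ℝ) := by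
      rw [show ((den F x : F)) = (((den F x : ℕ) : ℤ) : F) by push_cast; rfl, house_intCast]
      simp
    rw [h1]
    exact mul_le_mul_of_nonneg_left (house_le_Hinf x) (by positivity)
  calc C0 * house (algebraMap (𝓞 F) F (numer F x))
      ≤ max C0 0 * house (algebraMap (𝓞 F) F (numer F x)) :=
        mul_le_mul_of_nonneg_right (le_max_left _ _) (house_nonneg _)
    _ ≤ max C0 0 * THeight F x := mul_le_mul_of_nonneg_left hhouse (le_max_right _ _)

/-- the big comparison with glHeight -/
theorem prod_THeight_le {n : ℕ} (hn : 1 ≤ n) (γ : GL (Fin n) F) :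
    (∏ p : Fin n × Fin n, THeight F ((γ : Matrix (Fin n) (Fin n) F) p.1 p.2))
      ≤ glHeight F γ ^ (n * n) ∧ 1 ≤ glHeight F γ := by
  set M : Matrix (Fin n) (Fin n) F := (γ : Matrix (Fin n) (Fin n) F) with hM
  have hdet : M.det ≠ 0 := by
    have : IsUnit M.det := (Matrix.isUnit_iff_isUnit_det M).mp ⟨γ, rfl⟩
    exact this.ne_zero
  set T : Finset (HeightOneSpectrum (𝓞 F)) :=
    (Finset.univ.biUnion fun p : Fin n × Fin n => badFinset F (M p.1 p.2))
      ∪ badFinset F M.det with hT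
  set S : Finset (InfinitePlace F ⊕ HeightOneSpectrum (𝓞 F)) := Finset.univ.disjSum T with hS
  set A : InfinitePlace F ⊕ HeightOneSpectrum (𝓞 F) → ℝ := fun v =>
    Finset.univ.fold max (max 1 (placeAbs F v M.det)⁻¹)
      (fun p : Fin n × Fin n => placeAbs F v (M p.1 p.2)) with hA
  have hA1 : ∀ v, 1 ≤ A v := fun v => (Finset.le_fold_max _).mpr (Or.inl (le_max_left _ _))
  have hAe : ∀ v (p : Fin n × Fin n), placeAbs F v (M p.1 p.2) ≤ A v := fun v p =>
    (Finset.le_fold_max _).mpr (Or.inr ⟨p, Finset.mem_univ p, le_rfl⟩)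
  have hAs : ∀ v : HeightOneSpectrum (𝓞 F), v ∉ T → A (Sum.inr v) = 1 := by
    intro v hv
    rw [hT, Finset.mem_union] at hv
    push_neg at hv
    have hdet1 : placeAbs F (Sum.inr v) M.det = 1 := by
      apply placeAbs_inr_eq_one hdet
      by_contra hne
      exact hv.2 ((mem_badFinset hdet).mpr hne)
    refine le_antisymm ((Finset.fold_max_le _).mpr ⟨by simp [hdet1], ?_⟩) (hA1 _)
    intro p _
    by_cases hz : M p.1 p.2 = 0
    · simp [placeAbs, hz]
    · have hv1 : v.valuation F (M p.1 p.2) = 1 := by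
        by_contra hne
        exact hv.1 (Finset.mem_biUnion.mpr ⟨p, Finset.mem_univ _,
          (mem_badFinset hz).mpr hne⟩)
      rw [placeAbs_inr_eq_one hz hv1]
  have hsubset : Function.mulSupport A ⊆ ↑S := by
    intro v hv
    rcases v with w | v
    · exact Finset.mem_coe.mpr (Finset.inl_mem_disjSum.mpr (Finset.mem_univ w))
    · by_contra hmem
      apply hv
      apply hAs
      intro hvT
      exact hmem (Finset.mem_coe.mpr (Finset.inr_mem_disjSum.mpr hvT))
  have hgl : glHeight F γ = ∏ v ∈ S, A v := by
    rw [glHeight]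
    exact finprod_eq_prod_of_mulSupport_subset A hsubset
  constructor
  · have hple : ∀ p : Fin n × Fin n, THeight F (M p.1 p.2) ≤ glHeight F γ := by
      intro p
      have hTsub : badFinset F (M p.1 p.2) ⊆ T := fun v hv =>
        Finset.mem_union_left _ (Finset.mem_biUnion.mpr ⟨p, Finset.mem_univ _, hv⟩)
      have hfin : ∏ v ∈ T, max 1 (placeAbs F (Sum.inr v) (M p.1 p.2))
          = (den F (M p.1 p.2) : ℝ) := by
        have e1 : ∏ v ∈ T, max 1 (placeAbs F (Sum.inr v) (M p.1 p.2))
            = ∏ v ∈ T, (Ideal.absNorm v.asIdeal : ℝ) ^ (eExp F v (M p.1 p.2)) :=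
          Finset.prod_congr rfl fun v _ => factor_eq v _
        have e2 : ∏ v ∈ badFinset F (M p.1 p.2),
              (Ideal.absNorm v.asIdeal : ℝ) ^ (eExp F v (M p.1 p.2))
            = ∏ v ∈ T, (Ideal.absNorm v.asIdeal : ℝ) ^ (eExp F v (M p.1 p.2)) :=
          Finset.prod_subset hTsub fun v _ hvb => by rw [eExp_eq_zero hvb, pow_zero]
        rw [e1, ← e2, den]
        push_cast
        rfl
      have hTh : THeight F (M p.1 p.2) = ∏ v ∈ S, max 1 (placeAbs F v (M p.1 p.2)) := by
        rw [hS, Finset.prod_disjSum, hfin, THeight, mul_comm]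
        rfl
      rw [hTh, hgl]
      exact Finset.prod_le_prod (fun v _ => le_trans zero_le_one (le_max_left _ _))
        (fun v _ => max_le (hA1 v) (hAe v p))
    have hcard : (Finset.univ : Finset (Fin n × Fin n)).card = n * n := by simp
    calc ∏ p : Fin n × Fin n, THeight F (M p.1 p.2)
        ≤ ∏ _p : Fin n × Fin n, glHeight F γ :=
          Finset.prod_le_prod (fun p _ => le_trans zero_le_one (one_le_THeight _))
            (fun p _ => hple p)
      _ = glHeight F γ ^ (n * n) := by rw [Finset.prod_const, hcard]
  · rw [hgl]
    exact one_le_prod_real _ fun v _ => hA1 v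

/-- summability over pi types -/
theorem summable_pi {κ α : Type*} [Fintype κ] {f : α → ℝ} (hf : Summable f)
    (h0 : ∀ a, 0 ≤ f a) : Summable fun v : κ → α => ∏ k, f (v k) := by
  have fin : ∀ (m : ℕ), Summable fun v : Fin m → α => ∏ k, f (v k) := by
    intro m
    induction m with
    | zero =>
      have : (fun v : Fin 0 → α => ∏ k, f (v k)) = fun _ => 1 := by
        funext v
        simp
      rw [this]
      exact summable_of_finite_support (Set.toFinite _)
    | succ m ih =>
      have h := hf.mul_of_nonneg ih h0 fun v => Finset.prod_nonneg fun k _ => h0 _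
      have h2 := h.comp_injective (Fin.consEquiv fun _ : Fin (m + 1) => α).symm.injective
      refine h2.congr fun v => ?_
      show f (v 0) * ∏ k : Fin m, f (v k.succ) = ∏ k, f (v k)
      exact (Fin.prod_univ_succ fun k => f (v k)).symm
  set e := Fintype.equivFin κ with he
  have hinj : Function.Injective (fun v : κ → α => (v ∘ e.symm : Fin (Fintype.card κ) → α)) := by
    intro v w h
    funext k
    have := congrFun h (e k)
    simpa using this
  refine ((fin (Fintype.card κ)).comp_injective hinj).congr fun v => ?_
  exact Equiv.prod_comp e.symm fun k => f (v k)

theorem summable_nat_aux : Summable fun b : ℕ => ((1 + (b : ℝ)) ^ 2)⁻¹ := by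
  have h := Real.summable_nat_pow_inv.mpr (by norm_num : 1 < 2)
  have h2 := (summable_nat_add_iff 1).mpr h
  refine h2.congr fun n => ?_
  push_cast
  ring_nf

theorem summable_int_aux : Summable fun z : ℤ => ((1 + (|z| : ℝ)) ^ 2)⁻¹ := by
  apply Summable.of_nat_of_neg
  · refine summable_nat_aux.congr fun n => ?_
    simp [abs_of_nonneg]
  · refine summable_nat_aux.congr fun n => ?_
    simp [abs_of_nonpos]

end GLHeightAux

/-- Let `F` be a number field and `n ≥ 1`.  There exists `d > 0` such that the series
`∑_{γ ∈ GL_n(F)} N(γ)^{-d}` converges, where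
`N(γ) = ∏_v max(1, max_{i,j} |γ_{ij}|_v, |det γ|_v⁻¹)`. -/
theorem summable_glHeight_rpow_neg (F : Type*) [Field F] [NumberField F]
    (n : ℕ) (hn : 1 ≤ n) :
    ∃ d > (0 : ℝ), Summable fun γ : GL (Fin n) F => glHeight F γ ^ (-d) := by
  classical
  open GLHeightAux in
  obtain ⟨C, hC0, hC⟩ := exists_coords_bound (F := F)
  set m := Fintype.card (F →+* ℂ) with hm
  set d₀ : ℕ := 2 * (m + 1) with hd₀
  set D : ℕ := (n * n) * d₀ with hD
  have hDpos : 0 < D := by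
    have : 0 < n := hn
    positivity
  refine ⟨(D : ℝ), by exact_mod_cast hDpos, ?_⟩
  set u : ℤ → ℝ := fun z => ((1 + |(z : ℝ)|) ^ 2)⁻¹ with hu
  set gg : ℕ × ((F →+* ℂ) → ℤ) → ℝ :=
    fun bc => ((1 + (bc.1 : ℝ)) ^ 2)⁻¹ * ∏ i, u (bc.2 i) with hgg
  have hgg_nonneg : ∀ bc, 0 ≤ gg bc := by
    intro bc
    apply mul_nonneg (by positivity)
    exact Finset.prod_nonneg fun i _ => by positivity
  have hgg_sum : Summable gg := by
    apply Summable.mul_of_nonneg summable_nat_aux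
      (summable_pi summable_int_aux fun z => by positivity)
    · intro b
      positivity
    · intro c
      exact Finset.prod_nonneg fun i _ => by positivity
  set K : ℝ := 4 * (1 + C) ^ (2 * m) with hK
  have hKpos : 0 < K := by positivity
  have key : ∀ x : F, ((THeight F x) ^ d₀)⁻¹ ≤ K * gg (Jmap F x) := by
    intro x
    set T := THeight F x with hTdef
    have hT1 : 1 ≤ T := one_le_THeight x
    have hb : (1 + (den F x : ℝ)) ≤ 2 * T := by
      have := den_le_THeight x
      rw [← hTdef] at this
      linarith
    have hc : ∀ i, 1 + |(coords F x i : ℝ)| ≤ (1 + C) * T := by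
      intro i
      have h1 := hC x i
      rw [← hTdef] at h1
      nlinarith
    have hAbound : ((1 + (den F x : ℝ)) ^ 2) * ∏ i, (1 + |(coords F x i : ℝ)|) ^ 2
        ≤ K * T ^ d₀ := by
      have h1 : ((1 + (den F x : ℝ)) ^ 2) ≤ 4 * T ^ 2 := by nlinarith
      have h2 : ∏ i, (1 + |(coords F x i : ℝ)|) ^ 2
          ≤ ∏ _i : F →+* ℂ, ((1 + C) * T) ^ 2 :=
        Finset.prod_le_prod (fun i _ => by positivity)
          (fun i _ => pow_le_pow_left₀ (by positivity) (hc i) 2)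
      have h3 : ∏ _i : F →+* ℂ, ((1 + C) * T) ^ 2 = (((1 + C) * T) ^ 2) ^ m := by
        rw [Finset.prod_const, Finset.card_univ, hm]
      have h4 : (((1 + C) * T) ^ 2) ^ m = (1 + C) ^ (2 * m) * T ^ (2 * m) := by
        rw [mul_pow, mul_pow, ← pow_mul, ← pow_mul]
      have h5 : (0 : ℝ) ≤ ∏ i, (1 + |(coords F x i : ℝ)|) ^ 2 :=
        Finset.prod_nonneg fun i _ => by positivity
      calc ((1 + (den F x : ℝ)) ^ 2) * ∏ i, (1 + |(coords F x i : ℝ)|) ^ 2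
          ≤ (4 * T ^ 2) * ((1 + C) ^ (2 * m) * T ^ (2 * m)) := by
            apply mul_le_mul h1 (by rw [← h4, ← h3]; exact h2) h5 (by positivity)
        _ = K * T ^ (2 + 2 * m) := by rw [hK, pow_add]; ring
        _ = K * T ^ d₀ := by rw [hd₀]; ring_nf
    have hApos : (0 : ℝ) < ((1 + (den F x : ℝ)) ^ 2) * ∏ i, (1 + |(coords F x i : ℝ)|) ^ 2 := by
      apply mul_pos (by positivity)
      exact Finset.prod_pos fun i _ => by positivity
    have hTpos : (0 : ℝ) < T ^ d₀ := by positivity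
    have hggJ : K * gg (Jmap F x)
        = K * (((1 + (den F x : ℝ)) ^ 2) * ∏ i, (1 + |(coords F x i : ℝ)|) ^ 2)⁻¹ := by
      rw [hgg]
      congr 1
      rw [mul_inv, ← Finset.prod_inv_distrib]
      rfl
    rw [hggJ, inv_eq_one_div,
      show K * (((1 + (den F x : ℝ)) ^ 2) * ∏ i, (1 + |(coords F x i : ℝ)|) ^ 2)⁻¹
        = K / (((1 + (den F x : ℝ)) ^ 2) * ∏ i, (1 + |(coords F x i : ℝ)|) ^ 2) from
        (div_eq_mul_inv _ _).symm,
      div_le_div_iff₀ hTpos hApos, one_mul]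
    exact hAbound
  have main : ∀ γ : GL (Fin n) F, glHeight F γ ^ (-(D : ℝ))
      ≤ ∏ p : Fin n × Fin n, (K * gg (Jmap F ((γ : Matrix (Fin n) (Fin n) F) p.1 p.2))) := by
    intro γ
    obtain ⟨hprod, hone⟩ := prod_THeight_le hn γ
    have hgpos : (0 : ℝ) < glHeight F γ := lt_of_lt_of_le zero_lt_one hone
    have hrw : glHeight F γ ^ (-(D : ℝ)) = ((glHeight F γ ^ D : ℝ))⁻¹ := by
      rw [← Real.rpow_natCast (glHeight F γ) D, ← Real.rpow_neg hgpos.le]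
    rw [hrw]
    have hprodpos : (0 : ℝ)
        < ∏ p : Fin n × Fin n, THeight F ((γ : Matrix (Fin n) (Fin n) F) p.1 p.2) :=
      Finset.prod_pos fun p _ => lt_of_lt_of_le zero_lt_one (one_le_THeight _)
    have h1 : (∏ p : Fin n × Fin n, THeight F ((γ : Matrix (Fin n) (Fin n) F) p.1 p.2)) ^ d₀
        ≤ (glHeight F γ ^ (n * n)) ^ d₀ := pow_le_pow_left₀ hprodpos.le hprod d₀
    have h2 : glHeight F γ ^ D = (glHeight F γ ^ (n * n)) ^ d₀ := by rw [← pow_mul]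
    have h3 : ((glHeight F γ ^ D))⁻¹
        ≤ ((∏ p : Fin n × Fin n, THeight F ((γ : Matrix (Fin n) (Fin n) F) p.1 p.2)) ^ d₀)⁻¹ := by
      apply inv_anti₀ (pow_pos hprodpos d₀)
      rw [h2]
      exact h1
    refine le_trans h3 ?_
    rw [← Finset.prod_pow, ← Finset.prod_inv_distrib]
    exact Finset.prod_le_prod
      (fun p _ => inv_nonneg.mpr (pow_nonneg (le_trans zero_le_one (one_le_THeight _)) _))
      (fun p _ => key _)
  have hG : Summable fun v : (Fin n × Fin n) → F => ∏ p, (K * gg (Jmap F (v p))) := by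
    apply summable_pi (f := fun x : F => K * gg (Jmap F x))
    · exact (hgg_sum.comp_injective Jmap_injective).mul_left K
    · intro x
      exact mul_nonneg hKpos.le (hgg_nonneg _)
  have hinj : Function.Injective
      (fun γ : GL (Fin n) F => (fun p : Fin n × Fin n =>
        (γ : Matrix (Fin n) (Fin n) F) p.1 p.2)) := by
    intro γ1 γ2 h
    apply Matrix.GeneralLinearGroup.ext
    intro i j
    exact congrFun h (i, j)
  apply Summable.of_nonneg_of_le
    (fun γ => Real.rpow_nonneg (le_trans zero_le_one (prod_THeight_le hn γ).2) _)
    (fun γ => main γ)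
  exact hG.comp_injective hinj
end

section
/- Let E/F be a Galois extension of fields of degree 2 and let σ be the nontrivial element of Gal(E/F), applied entrywise to matrices. Then for every n ≥ 1 and every s ∈ GL_n(E) satisfying s · σ(s) = 1, there exists g ∈ GL_n(E) such that s = g · σ(g)⁻¹. Equivalently, the map ν : GL_n(E) → S_n(F) := {s ∈ GL_n(E) : s·σ(s) = 1}, ν(g) = g·σ(g)⁻¹, is surjective. -/
/-- Hilbert's Theorem 90 for `GL_n`: let `E/F` be a Galois extension of fields of degree `2`
and `σ` the nontrivial element of `Gal(E/F)`, applied entrywise to matrices.  Then for every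
`n ≥ 1` and every `s ∈ GL_n(E)` with `s σ(s) = 1` there exists `g ∈ GL_n(E)` with
`s = g σ(g)⁻¹`; i.e. the map `ν : GL_n(E) → S_n(F)`, `ν(g) = g σ(g)⁻¹`, is surjective. -/
theorem hilbert90_GLn (F E : Type*) [Field F] [Field E] [Algebra F E] [IsGalois F E]
    (hdeg : Module.finrank F E = 2) (σ : E ≃ₐ[F] E) (hσ : σ ≠ AlgEquiv.refl)
    (n : ℕ) (hn : 1 ≤ n) (s : Matrix (Fin n) (Fin n) E) (hs_unit : IsUnit s)
    (hs : s * s.map σ = 1) :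
    ∃ g : Matrix (Fin n) (Fin n) E, IsUnit g ∧ s = g * (g.map σ)⁻¹ := by
  classical
  -- σ is an involution
  have hfd : FiniteDimensional F E := FiniteDimensional.of_finrank_pos (by omega)
  have hcard : Fintype.card (E ≃ₐ[F] E) = 2 := by
    rw [Fintype.card_eq_nat_card, IsGalois.card_aut_eq_finrank, hdeg]
  have hσ2 : ∀ x : E, σ (σ x) = x := by
    intro x
    have h : σ ^ 2 = 1 := by rw [← hcard]; exact pow_card_eq_one
    have := congrArg (fun f : E ≃ₐ[F] E => f x) h
    simpa [pow_two] using this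
  -- a non-fixed element
  obtain ⟨e, he⟩ : ∃ e : E, σ e ≠ e := by
    by_contra h
    push_neg at h
    exact hσ (AlgEquiv.ext h)
  set T : (Fin n → E) → (Fin n → E) :=
    fun v => s.mulVec (fun i => σ (v i)) with hTdef
  have hTT : ∀ v, T (T v) = v := by
    intro v
    show s.mulVec (fun i => σ (s.mulVec (fun j => σ (v j)) i)) = v
    have h1 : (fun i => σ (s.mulVec (fun j => σ (v j)) i)) = (s.map σ).mulVec v := by
      funext i
      simp [Matrix.mulVec, dotProduct, map_sum, map_mul, Matrix.map_apply, hσ2]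
    rw [h1, Matrix.mulVec_mulVec, hs, Matrix.one_mulVec]
  have hTadd : ∀ x y, T (x + y) = T x + T y := by
    intro x y
    show s.mulVec (fun i => σ (x i + y i)) = _
    have : (fun i => σ (x i + y i)) = (fun i => σ (x i)) + (fun i => σ (y i)) := by
      funext i; simp [map_add]
    rw [this, Matrix.mulVec_add]
  have hTsmul : ∀ (a : E) x, T (a • x) = σ a • T x := by
    intro a x
    show s.mulVec (fun i => σ (a * x i)) = _
    have : (fun i => σ (a * x i)) = σ a • (fun i => σ (x i)) := by
      funext i; simp [map_mul]
    rw [this, Matrix.mulVec_smul]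
  -- fixed points of T span everything
  set W : Set (Fin n → E) := {v | T v = v} with hWdef
  have hspan : ∀ v, v ∈ Submodule.span E W := by
    intro v
    have hu : (v + T v) ∈ W := by
      show T (v + T v) = v + T v
      rw [hTadd, hTT]; abel
    have hw : (e • v + σ e • T v) ∈ W := by
      show T (e • v + σ e • T v) = e • v + σ e • T v
      rw [hTadd, hTsmul, hTsmul, hTT, hσ2]; abel
    have h1 : σ e • (v + T v) - (e • v + σ e • T v) = (σ e - e) • v := by
      rw [sub_smul, smul_add]; abel
    have h2 : v = (σ e - e)⁻¹ • ((σ e) • (v + T v) - (e • v + σ e • T v)) := by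
      rw [h1, smul_smul, inv_mul_cancel₀ (sub_ne_zero.mpr he), one_smul]
    rw [h2]
    exact Submodule.smul_mem _ _ (Submodule.sub_mem _
      (Submodule.smul_mem _ _ (Submodule.subset_span hu))
      (Submodule.subset_span hw))
  -- extract a basis from W
  obtain ⟨b, hbW, hbspan, hbli⟩ := exists_linearIndependent E W
  have hbtop : Submodule.span E (Set.range ((↑) : b → (Fin n → E))) = ⊤ := by
    rw [Subtype.range_coe, hbspan]
    exact eq_top_iff.mpr fun v _ => hspan v
  let B : Module.Basis b E (Fin n → E) := Module.Basis.mk hbli (le_of_eq hbtop.symm)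
  let eqv : b ≃ Fin n := B.indexEquiv (Pi.basisFun E (Fin n))
  let B' : Module.Basis (Fin n) E (Fin n → E) := B.reindex eqv
  have hB'W : ∀ j, B' j ∈ W := by
    intro j
    have : B' j = B (eqv.symm j) := B.reindex_apply eqv j
    rw [this]
    have : B (eqv.symm j) = ((eqv.symm j : b) : Fin n → E) := Module.Basis.mk_apply _ _ _
    rw [this]
    exact hbW (eqv.symm j).2
  set g : Matrix (Fin n) (Fin n) E := Matrix.of (fun i j => B' j i) with hgdef
  have hg : g = (Pi.basisFun E (Fin n)).toMatrix B' := by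
    ext i j
    simp [Module.Basis.toMatrix_apply, Pi.basisFun_repr, hgdef]
  have hgu : IsUnit g := by
    rw [hg]
    have := (Pi.basisFun E (Fin n)).invertibleToMatrix B'
    exact isUnit_of_invertible _
  -- s * g.map σ = g
  have hkey : s * g.map σ = g := by
    ext i j
    have hfix : T (B' j) = B' j := hB'W j
    have := congrFun hfix i
    simpa [Matrix.mul_apply, Matrix.mulVec, dotProduct, Matrix.map_apply, hgdef,
      hTdef] using this
  have hmapu : IsUnit (g.map σ).det := by
    have hmm : g.map ⇑σ = (σ : E →+* E).mapMatrix g := rfl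
    rw [hmm, ← RingHom.map_det]
    exact (hgu.map (Matrix.detMonoidHom)).map σ
  refine ⟨g, hgu, ?_⟩
  calc s = s * (g.map σ * (g.map σ)⁻¹) := by
          rw [Matrix.mul_nonsing_inv _ hmapu, mul_one]
    _ = (s * g.map σ) * (g.map σ)⁻¹ := by rw [mul_assoc]
    _ = g * (g.map σ)⁻¹ := by rw [hkey]
end
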